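/- Consider the noisy SIS model on a finite graph G_n with |V_n| = n, parameters a, λ, κ > 0 with a + λ·Δ_max < 1, in the strong external infection regime 0 < κ < 1/(4(n-1)) and a > 1 - κ > 1/2, and let γ := (1-κ)a + (1-a)κ - 2(n-1)κ(1-κ). For the coupled chains started from σ_0, η_0 ∈ Ω_n (updating the same vertex in both chains, so that ρ_t := ρ(σ(t), η(t)) changes by at most 1 per step and satisfies the one-step contraction E[ρ_{t+1} | ρ_t] ≤ (1 - γ/n)·ρ_t), the second moment satisfies, for every integer t ≥ 0: E[ρ_t²] ≤ ρ(σ_0,η_0)²·(1 - 2γ/n)^t + n/(2γ). -/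

import Mathlib

open Finset Real

noncomputable section

abbrev Config (n : ℕ) := Fin n → Bool

variable {n : ℕ}

/-- Expectation of `f` under a finitely-supported distribution `μ`. -/
def expect {S : Type*} [Fintype S] (μ : S → ℝ) (f : S → ℝ) : ℝ := ∑ s, μ s * f s

/-- One step of evolution of a distribution under a transition kernel `K`. -/
def stepDist {S : Type*} [Fintype S] (K : S → S → ℝ) (μ : S → ℝ) : S → ℝ :=
  fun s' => ∑ s, μ s * K s s'

/-- `t` steps of evolution of a distribution under a transition kernel `K`. -/
def iterDist {S : Type*} [Fintype S] (K : S → S → ℝ) (μ : S → ℝ) : ℕ → S → ℝ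
  | 0 => μ
  | t + 1 => stepDist K (iterDist K μ t)

/-- The point mass at `s0`. -/
def deltaDist {S : Type*} [DecidableEq S] (s0 : S) : S → ℝ := fun s => if s = s0 then 1 else 0

/-- Hamming distance between two configurations. -/
def hamming (σ η : Config n) : ℕ := (univ.filter fun x => σ x ≠ η x).card

/-- Probability that the chosen vertex `x` changes its state: an infected vertex recovers
with probability `kap`, a susceptible vertex gets infected with probability
`a + lam * (number of infected neighbours)`. -/
def flipProb (ninf : Config n → Fin n → ℕ) (a lam kap : ℝ) (σ : Config n) (x : Fin n) : ℝ :=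
  if σ x then kap else a + lam * ninf σ x

/-- The configuration obtained from `σ` by flipping the state of vertex `x`. -/
def flipAt (σ : Config n) (x : Fin n) : Config n := Function.update σ x (!σ x)

/-- Conditional one-step law of the noisy SIS chain given that vertex `x` was chosen. -/
def localKernel (ninf : Config n → Fin n → ℕ) (a lam kap : ℝ) (σ : Config n) (x : Fin n)
    (σ' : Config n) : ℝ :=
  (if σ' = flipAt σ x then flipProb ninf a lam kap σ x else 0)
    + (if σ' = σ then 1 - flipProb ninf a lam kap σ x else 0)

/-- The transition kernel of the noisy SIS chain: a vertex is chosen uniformly at random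
and updated according to the SIS rules. -/
def sisKernel (ninf : Config n → Fin n → ℕ) (a lam kap : ℝ) : Config n → Config n → ℝ :=
  fun σ σ' => (1 / n) * ∑ x : Fin n, localKernel ninf a lam kap σ x σ'

/-- The coupling of two noisy SIS chains used in the paper: the same uniformly chosen vertex
is updated in both chains, independently. -/
def sisCoupling (ninf : Config n → Fin n → ℕ) (a lam kap : ℝ) :
    Config n × Config n → Config n × Config n → ℝ :=
  fun p q =>
    (1 / n) * ∑ x : Fin n,
      localKernel ninf a lam kap p.1 x q.1 * localKernel ninf a lam kap p.2 x q.2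

/-- Number of infected neighbours of `x` in the graph `G` for the configuration `σ`. -/
def nInfGraph (G : SimpleGraph (Fin n)) [DecidableRel G.Adj] : Config n → Fin n → ℕ :=
  fun σ x => ((G.neighborFinset x).filter fun y => σ y = true).card

/-- Total variation distance between two distributions on a finite state space. -/
def dTV {S : Type*} [Fintype S] (μ ν : S → ℝ) : ℝ := (1 / 2) * ∑ s, |μ s - ν s|

/-- The law at time `t` of the noisy SIS chain started from `η0`. -/
def sisLaw (ninf : Config n → Fin n → ℕ) (a lam kap : ℝ) (η0 : Config n) (t : ℕ) :
    Config n → ℝ :=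
  iterDist (sisKernel ninf a lam kap) (deltaDist η0) t

/-- `pim` is a stationary distribution for the kernel `K`. -/
def IsStationaryDistrib {S : Type*} [Fintype S] (K : S → S → ℝ) (pim : S → ℝ) : Prop :=
  (∀ s, 0 ≤ pim s) ∧ (∑ s, pim s) = 1 ∧ ∀ s', (∑ s, pim s * K s s') = pim s'

/-- Worst-case total variation distance to the stationary distribution `pim` at time `t`. -/
def worstDist (ninf : Config n → Fin n → ℕ) (a lam kap : ℝ) (pim : Config n → ℝ) (t : ℕ) : ℝ :=
  ⨆ η0 : Config n, dTV (sisLaw ninf a lam kap η0 t) pim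

/-- The `ε`-mixing time of the noisy SIS chain. -/
def mixingTime (ninf : Config n → Fin n → ℕ) (a lam kap : ℝ) (pim : Config n → ℝ) (ε : ℝ) : ℕ :=
  sInf {t : ℕ | worstDist ninf a lam kap pim t ≤ ε}

/-- The contraction constant `γ` of the paper. -/
def gammaSIS (n : ℕ) (a kap : ℝ) : ℝ :=
  (1 - kap) * a + (1 - a) * kap - 2 * ((n : ℝ) - 1) * kap * (1 - kap)

/-- The constant `β` of the paper. -/
def betaSIS (pstar kap : ℝ) : ℝ := kap + pstar * (1 - 2 * kap)

/-- `c` is a coupling of the distributions `μ` and `ν`. -/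
def IsCouplingDist {S : Type*} [Fintype S] (c : S × S → ℝ) (μ ν : S → ℝ) : Prop :=
  (∀ q, 0 ≤ c q) ∧ (∀ s, (∑ e, c (s, e)) = μ s) ∧ (∀ e, (∑ s, c (s, e)) = ν e)

/-- `Kc` is a (Markovian) coupling kernel for the transition kernel `K`: both marginals of
every row of `Kc` evolve according to `K`. -/
def IsCouplingKernel {S : Type*} [Fintype S] (Kc : S × S → S × S → ℝ) (K : S → S → ℝ) : Prop :=
  (∀ p q, 0 ≤ Kc p q) ∧ (∀ p s', (∑ e', Kc p (s', e')) = K p.1 s')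
    ∧ (∀ p e', (∑ s', Kc p (s', e')) = K p.2 e')

end

-- ==================== AUX ====================
section Aux
variable {n : ℕ}

lemma flipAt_ne (σ : Config n) (x : Fin n) : flipAt σ x ≠ σ := by
  intro h
  have := congrFun h x
  simp [flipAt] at this

lemma sum_local_mul (ninf : Config n → Fin n → ℕ) (a lam kap : ℝ) (σ : Config n) (x : Fin n)
    (g : Config n → ℝ) :
    ∑ σ', localKernel ninf a lam kap σ x σ' * g σ'
      = flipProb ninf a lam kap σ x * g (flipAt σ x)
        + (1 - flipProb ninf a lam kap σ x) * g σ := by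
  simp [localKernel, add_mul, ite_mul, Finset.sum_add_distrib, Finset.sum_ite_eq']

lemma hamming_real (σ η : Config n) :
    (hamming σ η : ℝ) = ∑ y, (if σ y = η y then (0:ℝ) else 1) := by
  have h : hamming σ η = ∑ y, (if σ y = η y then 0 else 1) := by
    rw [hamming, Finset.card_filter]
    exact Finset.sum_congr rfl fun y _ => by by_cases h : σ y = η y <;> simp [h]
  rw [h]
  push_cast
  exact Finset.sum_congr rfl fun y _ => by by_cases h : σ y = η y <;> simp [h]

lemma hamming_flip_left (σ η : Config n) (x : Fin n) :
    (hamming (flipAt σ x) η : ℝ)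
      = (hamming σ η : ℝ) + (if σ x = η x then 1 else -1) := by
  rw [hamming_real, hamming_real]
  have key : ∀ y, (if flipAt σ x y = η y then (0:ℝ) else 1)
      = (if σ y = η y then (0:ℝ) else 1)
        + (if y = x then (if σ x = η x then (1:ℝ) else -1) else 0) := by
    intro y
    rcases eq_or_ne y x with rfl | h
    · simp only [flipAt, Function.update_self, if_pos rfl]
      cases hσ : σ y <;> cases hη : η y <;> norm_num
    · simp [flipAt, Function.update_of_ne h, h]
  rw [Finset.sum_congr rfl fun y _ => key y, Finset.sum_add_distrib]
  simp [Finset.sum_ite_eq']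

lemma hamming_flip_right (σ η : Config n) (x : Fin n) :
    (hamming σ (flipAt η x) : ℝ)
      = (hamming σ η : ℝ) + (if σ x = η x then 1 else -1) := by
  rw [hamming_real, hamming_real]
  have key : ∀ y, (if σ y = flipAt η x y then (0:ℝ) else 1)
      = (if σ y = η y then (0:ℝ) else 1)
        + (if y = x then (if σ x = η x then (1:ℝ) else -1) else 0) := by
    intro y
    rcases eq_or_ne y x with rfl | h
    · simp only [flipAt, Function.update_self, if_pos rfl]
      cases hσ : σ y <;> cases hη : η y <;> norm_num
    · simp [flipAt, Function.update_of_ne h, h]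
  rw [Finset.sum_congr rfl fun y _ => key y, Finset.sum_add_distrib]
  simp [Finset.sum_ite_eq']

lemma hamming_flip_flip (σ η : Config n) (x : Fin n) :
    (hamming (flipAt σ x) (flipAt η x) : ℝ) = (hamming σ η : ℝ) := by
  rw [hamming_real, hamming_real]
  refine Finset.sum_congr rfl fun y _ => ?_
  rcases eq_or_ne y x with rfl | h
  · simp only [flipAt, Function.update_self]
    cases hσ : σ y <;> cases hη : η y <;> norm_num
  · simp [flipAt, Function.update_of_ne h]

lemma sum_pair_mul (ninf : Config n → Fin n → ℕ) (a lam kap : ℝ) (σ η : Config n) (x : Fin n)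
    (f : Config n → Config n → ℝ) :
    ∑ q : Config n × Config n,
        localKernel ninf a lam kap σ x q.1 * localKernel ninf a lam kap η x q.2 * f q.1 q.2
      = flipProb ninf a lam kap σ x * flipProb ninf a lam kap η x
            * f (flipAt σ x) (flipAt η x)
        + flipProb ninf a lam kap σ x * (1 - flipProb ninf a lam kap η x)
            * f (flipAt σ x) η
        + (1 - flipProb ninf a lam kap σ x) * flipProb ninf a lam kap η x
            * f σ (flipAt η x)
        + (1 - flipProb ninf a lam kap σ x) * (1 - flipProb ninf a lam kap η x) * f σ η := by
  rw [Fintype.sum_prod_type]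
  have inner : ∀ s, ∑ e, localKernel ninf a lam kap σ x s * localKernel ninf a lam kap η x e
        * f s e
      = localKernel ninf a lam kap σ x s
        * (flipProb ninf a lam kap η x * f s (flipAt η x)
            + (1 - flipProb ninf a lam kap η x) * f s η) := by
    intro s
    simp only [mul_assoc]
    rw [← Finset.mul_sum, sum_local_mul]
  rw [Finset.sum_congr rfl fun s _ => inner s, sum_local_mul]
  ring

end Aux

section Aux2
variable {n : ℕ}

lemma localKernel_sum_one (ninf : Config n → Fin n → ℕ) (a lam kap : ℝ) (σ : Config n)
    (x : Fin n) : ∑ σ', localKernel ninf a lam kap σ x σ' = 1 := by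
  have h := sum_local_mul ninf a lam kap σ x (fun _ => (1:ℝ))
  simp only [mul_one] at h
  linarith [h]

lemma localKernel_nonneg (ninf : Config n → Fin n → ℕ) (a lam kap : ℝ) (σ : Config n)
    (x : Fin n) (σ' : Config n) (h0 : 0 ≤ flipProb ninf a lam kap σ x)
    (h1 : flipProb ninf a lam kap σ x ≤ 1) : 0 ≤ localKernel ninf a lam kap σ x σ' := by
  unfold localKernel
  split_ifs <;> linarith

lemma m_le_beta {kap p r : ℝ} (hk : 0 ≤ kap) (hk2 : kap ≤ 1/2)
    (hp : 1 - kap ≤ p) (hp1 : p ≤ 1) (hr : 1 - kap ≤ r) (hr1 : r ≤ 1) :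
    p * (1 - r) + (1 - p) * r ≤ 2 * kap * (1 - kap) := by
  nlinarith [mul_nonneg (by linarith : (0:ℝ) ≤ kap - (1 - p))
      (by linarith : (0:ℝ) ≤ 1 - 2*(1-r)),
    mul_nonneg (by linarith : (0:ℝ) ≤ kap - (1 - r)) (by linarith : (0:ℝ) ≤ 1 - 2*kap)]

lemma m_ge_alpha {a kap q : ℝ} (hk2 : kap ≤ 1/2) (hq : a ≤ q) :
    (1 - kap) * a + (1 - a) * kap ≤ kap * (1 - q) + (1 - kap) * q := by
  nlinarith [mul_nonneg (by linarith : (0:ℝ) ≤ q - a) (by linarith : (0:ℝ) ≤ 1 - 2*kap)]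

lemma final_arith {N d al be : ℝ} (hd0 : 0 ≤ d) (hdn : d ≤ N)
    (hcase : d = 0 ∨ 1 ≤ d) (hal0 : 0 ≤ al) (hal1 : al ≤ 1) (hbe0 : 0 ≤ be) (hbe1 : be ≤ 1) :
    (N - d) * (be * (2*d + 1)) + d * (al * (1 - 2*d))
      ≤ N - 2 * (al - (N - 1) * be) * d^2 := by
  rcases hcase with rfl | hd1
  · nlinarith
  · nlinarith [mul_nonneg hbe0 (mul_nonneg hd0
        (mul_nonneg (by linarith : (0:ℝ) ≤ N) (by linarith : (0:ℝ) ≤ d - 1))),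
      mul_nonneg (by linarith : (0:ℝ) ≤ N - d) (by linarith : (0:ℝ) ≤ 1 - be),
      mul_nonneg hd0 (by linarith : (0:ℝ) ≤ 1 - al)]

lemma gamma_pos {n : ℕ} (hn : 2 ≤ n) {a kap : ℝ} (hkap : 0 < kap)
    (hkap' : kap < 1 / (4 * ((n:ℝ) - 1))) (hreg1 : 1 - kap < a) (hreg2 : 1/2 < 1 - kap)
    (ha1 : a ≤ 1) : 0 < gammaSIS n a kap := by
  have hn1 : (1:ℝ) ≤ (n:ℝ) - 1 := by
    have : (2:ℝ) ≤ n := by exact_mod_cast hn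
    linarith
  have hpos : 0 < 4 * ((n:ℝ) - 1) := by linarith
  have hk4 : kap * (4 * ((n:ℝ)-1)) < 1 := (lt_div_iff₀ hpos).mp hkap'
  unfold gammaSIS
  nlinarith [mul_pos (by linarith : (0:ℝ) < 1 - kap)
      (by nlinarith : (0:ℝ) < a - 2*((n:ℝ)-1)*kap),
    mul_nonneg (by linarith : (0:ℝ) ≤ 1 - a) hkap.le]

lemma gamma_le_one {n : ℕ} (hn : 2 ≤ n) {a kap : ℝ} (hkap : 0 ≤ kap) (hkap2 : kap ≤ 1/2)
    (ha0 : 0 ≤ a) (ha1 : a ≤ 1) : gammaSIS n a kap ≤ 1 := by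
  have hn1 : (1:ℝ) ≤ (n:ℝ) - 1 := by
    have : (2:ℝ) ≤ n := by exact_mod_cast hn
    linarith
  unfold gammaSIS
  nlinarith [mul_nonneg (by linarith : (0:ℝ) ≤ 1 - a) (by linarith : (0:ℝ) ≤ 1 - kap),
    mul_nonneg ha0 hkap,
    mul_nonneg (by linarith : (0:ℝ) ≤ (n:ℝ) - 1)
      (mul_nonneg hkap (by linarith : (0:ℝ) ≤ 1 - kap))]

lemma iterDist_nonneg {S : Type*} [Fintype S] (K : S → S → ℝ) (hK : ∀ s s', 0 ≤ K s s')
    (μ : S → ℝ) (hμ : ∀ s, 0 ≤ μ s) (t : ℕ) : ∀ s, 0 ≤ iterDist K μ t s := by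
  induction t with
  | zero => exact hμ
  | succ t ih =>
    intro s
    exact Finset.sum_nonneg fun q _ => mul_nonneg (ih q) (hK q s)

lemma iterDist_sum_one {S : Type*} [Fintype S] (K : S → S → ℝ)
    (hK : ∀ s, ∑ s', K s s' = 1) (μ : S → ℝ) (hμ : ∑ s, μ s = 1) (t : ℕ) :
    ∑ s, iterDist K μ t s = 1 := by
  induction t with
  | zero => exact hμ
  | succ t ih =>
    show ∑ s', stepDist K (iterDist K μ t) s' = 1
    unfold stepDist
    rw [Finset.sum_comm]
    have h : ∀ s, ∑ s', iterDist K μ t s * K s s' = iterDist K μ t s := by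
      intro s; rw [← Finset.mul_sum, hK, mul_one]
    rw [Finset.sum_congr rfl fun s _ => h s]
    exact ih

lemma expect_step_le {S : Type*} [Fintype S] (Kc : S → S → ℝ) (μ : S → ℝ) (f : S → ℝ)
    (r : ℝ) (hμ0 : ∀ s, 0 ≤ μ s) (hμ1 : ∑ s, μ s = 1)
    (hrow : ∀ p, ∑ q, Kc p q * f q ≤ r * f p + 1) :
    _root_.expect (stepDist Kc μ) f ≤ r * _root_.expect μ f + 1 := by
  unfold _root_.expect stepDist
  have e1 : ∀ q, (∑ p, μ p * Kc p q) * f q = ∑ p, μ p * (Kc p q * f q) := by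
    intro q; rw [Finset.sum_mul]; exact Finset.sum_congr rfl fun p _ => by ring
  rw [Finset.sum_congr rfl fun q _ => e1 q, Finset.sum_comm]
  have e2 : ∀ p, ∑ q, μ p * (Kc p q * f q) = μ p * ∑ q, Kc p q * f q :=
    fun p => (Finset.mul_sum _ _ _).symm
  rw [Finset.sum_congr rfl fun p _ => e2 p]
  calc ∑ p, μ p * ∑ q, Kc p q * f q ≤ ∑ p, μ p * (r * f p + 1) :=
        Finset.sum_le_sum fun p _ => mul_le_mul_of_nonneg_left (hrow p) (hμ0 p)
    _ = r * (∑ p, μ p * f p) + ∑ p, μ p := by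
        rw [Finset.mul_sum, ← Finset.sum_add_distrib]
        exact Finset.sum_congr rfl fun p _ => by ring
    _ = r * (∑ p, μ p * f p) + 1 := by rw [hμ1]

end Aux2

section Row

set_option maxHeartbeats 1000000 in
lemma row_bound (n : ℕ) (hn : 2 ≤ n) (G : SimpleGraph (Fin n)) [DecidableRel G.Adj]
    (a lam kap : ℝ) (ha : 0 < a) (hlam : 0 < lam) (hkap : 0 < kap)
    (hpstar : a + lam * (G.maxDegree : ℝ) < 1)
    (hkap' : kap < 1 / (4 * ((n : ℝ) - 1)))
    (hreg1 : 1 - kap < a) (hreg2 : 1 / 2 < 1 - kap)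
    (σ η : Config n) :
    ∑ q : Config n × Config n,
        sisCoupling (nInfGraph G) a lam kap (σ, η) q * (hamming q.1 q.2 : ℝ)^2
      ≤ (1 - 2 * gammaSIS n a kap / n) * (hamming σ η : ℝ)^2 + 1 := by
  have hn1 : (1:ℝ) ≤ (n:ℝ) - 1 := by
    have : (2:ℝ) ≤ n := by exact_mod_cast hn
    linarith
  have hn0 : (0:ℝ) < n := by linarith
  have hk2 : kap ≤ 1/2 := by linarith
  have ha1 : a < 1 := by nlinarith [mul_nonneg hlam.le (Nat.cast_nonneg G.maxDegree)]
  set al : ℝ := (1 - kap) * a + (1 - a) * kap with hal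
  set be : ℝ := 2 * kap * (1 - kap) with hbe
  have hal0 : 0 ≤ al := by
    rw [hal]
    nlinarith [mul_nonneg (by linarith : (0:ℝ) ≤ 1 - kap) ha.le,
      mul_nonneg (by linarith : (0:ℝ) ≤ 1 - a) hkap.le]
  have hal1 : al ≤ 1 := by
    rw [hal]
    nlinarith [mul_nonneg (by linarith : (0:ℝ) ≤ 1 - a) (by linarith : (0:ℝ) ≤ 1 - kap),
      mul_nonneg ha.le hkap.le]
  have hbe0 : 0 ≤ be := by
    rw [hbe]; nlinarith
  have hbe1 : be ≤ 1 := by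
    rw [hbe]; nlinarith [sq_nonneg (1 - 2*kap)]
  -- flipProb facts
  have hPtrue : ∀ (τ : Config n) (x : Fin n), τ x = true →
      flipProb (nInfGraph G) a lam kap τ x = kap := by
    intro τ x h; simp [flipProb, h]
  have hPfalse : ∀ (τ : Config n) (x : Fin n), τ x = false →
      a ≤ flipProb (nInfGraph G) a lam kap τ x ∧ flipProb (nInfGraph G) a lam kap τ x < 1 := by
    intro τ x h
    have hd : (nInfGraph G τ x : ℝ) ≤ (G.maxDegree : ℝ) := by
      have h1 : nInfGraph G τ x ≤ G.degree x := Finset.card_filter_le _ _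
      exact_mod_cast h1.trans (G.degree_le_maxDegree x)
    have h0 : (0:ℝ) ≤ (nInfGraph G τ x : ℝ) := Nat.cast_nonneg _
    simp only [flipProb, h, Bool.false_eq_true, if_false]
    constructor
    · nlinarith
    · nlinarith
  -- hamming distance facts
  have hd0 : (0:ℝ) ≤ (hamming σ η : ℝ) := Nat.cast_nonneg _
  have hdn' : hamming σ η ≤ n := by
    have h := Finset.card_filter_le Finset.univ (fun x => σ x ≠ η x)
    simpa [hamming] using h
  have hdn : (hamming σ η : ℝ) ≤ (n:ℝ) := by exact_mod_cast hdn'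
  have hcase : (hamming σ η : ℝ) = 0 ∨ (1:ℝ) ≤ (hamming σ η : ℝ) := by
    rcases Nat.eq_zero_or_pos (hamming σ η) with h | h
    · left; exact_mod_cast h
    · right; exact_mod_cast h
  -- per-vertex bound
  have key : ∀ x : Fin n,
      ∑ q : Config n × Config n,
          localKernel (nInfGraph G) a lam kap σ x q.1
            * localKernel (nInfGraph G) a lam kap η x q.2 * (hamming q.1 q.2 : ℝ)^2
        ≤ (hamming σ η : ℝ)^2
          + (if σ x = η x then be * (2*(hamming σ η : ℝ)+1)
              else al * (1-2*(hamming σ η : ℝ))) := by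
    intro x
    have hsp := sum_pair_mul (nInfGraph G) a lam kap σ η x
      (fun s e => (hamming s e : ℝ)^2)
    rw [hsp, hamming_flip_flip σ η x, hamming_flip_left σ η x, hamming_flip_right σ η x]
    by_cases hx : σ x = η x
    · simp only [if_pos hx]
      have hm : flipProb (nInfGraph G) a lam kap σ x
            * (1 - flipProb (nInfGraph G) a lam kap η x)
          + (1 - flipProb (nInfGraph G) a lam kap σ x)
            * flipProb (nInfGraph G) a lam kap η x ≤ be := by
        cases hb : σ x
        · have hb' : η x = false := by rw [← hx, hb]
          obtain ⟨h1, h2⟩ := hPfalse σ x hb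
          obtain ⟨h3, h4⟩ := hPfalse η x hb'
          rw [hbe]
          exact m_le_beta hkap.le hk2 (by linarith) (by linarith) (by linarith) (by linarith)
        · have hb' : η x = true := by rw [← hx, hb]
          rw [hPtrue σ x hb, hPtrue η x hb', hbe]
          nlinarith
      have h2d : (0:ℝ) ≤ 2*(hamming σ η : ℝ)+1 := by linarith
      nlinarith [mul_le_mul_of_nonneg_right hm h2d]
    · simp only [if_neg hx]
      have hd1 : (1:ℝ) ≤ (hamming σ η : ℝ) := by
        have hpos : 0 < hamming σ η := Finset.card_pos.mpr
          ⟨x, Finset.mem_filter.mpr ⟨Finset.mem_univ x, hx⟩⟩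
        exact_mod_cast hpos
      have hm : al ≤ flipProb (nInfGraph G) a lam kap σ x
            * (1 - flipProb (nInfGraph G) a lam kap η x)
          + (1 - flipProb (nInfGraph G) a lam kap σ x)
            * flipProb (nInfGraph G) a lam kap η x := by
        cases hb : σ x
        · have hb' : η x = true := by
            cases hc : η x
            · exact absurd (hb.trans hc.symm) hx
            · rfl
          obtain ⟨h1, h2⟩ := hPfalse σ x hb
          have hma := m_ge_alpha (a := a) (kap := kap) hk2 h1
          rw [hPtrue η x hb', hal]
          nlinarith [hma]
        · have hb' : η x = false := by
            cases hc : η x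
            · rfl
            · exact absurd (hb.trans hc.symm) hx
          obtain ⟨h1, h2⟩ := hPfalse η x hb'
          have hma := m_ge_alpha (a := a) (kap := kap) hk2 h1
          rw [hPtrue σ x hb, hal]
          nlinarith [hma]
      have h2d : 1 - 2*(hamming σ η : ℝ) ≤ 0 := by linarith
      nlinarith [mul_le_mul_of_nonpos_right hm h2d]
  -- counting sum of the if-term
  have hcount : ∀ (A B : ℝ), ∑ x : Fin n, (if σ x = η x then A else B)
      = ((n:ℝ) - (hamming σ η : ℝ)) * A + (hamming σ η : ℝ) * B := by
    intro A B
    have h1 : ∀ x : Fin n, (if σ x = η x then A else B)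
        = A + (if σ x ≠ η x then B - A else 0) := by
      intro x
      by_cases h : σ x = η x
      · simp [h]
      · simp [h]
    rw [Finset.sum_congr rfl fun x _ => h1 x, Finset.sum_add_distrib, Finset.sum_const,
      Finset.card_univ, Fintype.card_fin, Finset.sum_ite, Finset.sum_const,
      Finset.sum_const_zero, add_zero, nsmul_eq_mul, nsmul_eq_mul]
    have h2 : (Finset.univ.filter fun x => σ x ≠ η x).card = hamming σ η := rfl
    rw [h2]; ring
  -- rewrite total sum
  have hrw : ∑ q : Config n × Config n,
      sisCoupling (nInfGraph G) a lam kap (σ, η) q * (hamming q.1 q.2 : ℝ)^2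
      = (1/(n:ℝ)) * ∑ x : Fin n, ∑ q : Config n × Config n,
          localKernel (nInfGraph G) a lam kap σ x q.1
            * localKernel (nInfGraph G) a lam kap η x q.2 * (hamming q.1 q.2 : ℝ)^2 := by
    simp only [sisCoupling]
    calc ∑ q : Config n × Config n,
        ((1/(n:ℝ)) * ∑ x : Fin n, localKernel (nInfGraph G) a lam kap σ x q.1
            * localKernel (nInfGraph G) a lam kap η x q.2) * (hamming q.1 q.2 : ℝ)^2
        = ∑ q : Config n × Config n, ∑ x : Fin n,
            (1/(n:ℝ)) * (localKernel (nInfGraph G) a lam kap σ x q.1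
              * localKernel (nInfGraph G) a lam kap η x q.2 * (hamming q.1 q.2 : ℝ)^2) := by
          refine Finset.sum_congr rfl fun q _ => ?_
          rw [Finset.mul_sum, Finset.sum_mul]
          exact Finset.sum_congr rfl fun x _ => by ring
      _ = ∑ x : Fin n, ∑ q : Config n × Config n,
            (1/(n:ℝ)) * (localKernel (nInfGraph G) a lam kap σ x q.1
              * localKernel (nInfGraph G) a lam kap η x q.2 * (hamming q.1 q.2 : ℝ)^2) :=
          Finset.sum_comm
      _ = (1/(n:ℝ)) * ∑ x : Fin n, ∑ q : Config n × Config n,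
            localKernel (nInfGraph G) a lam kap σ x q.1
              * localKernel (nInfGraph G) a lam kap η x q.2 * (hamming q.1 q.2 : ℝ)^2 := by
          simp only [← Finset.mul_sum]
  rw [hrw]
  have hγeq : gammaSIS n a kap = al - ((n:ℝ)-1) * be := by
    rw [hal, hbe]; unfold gammaSIS; ring
  have hfa := final_arith (N := (n:ℝ)) (d := (hamming σ η : ℝ)) (al := al) (be := be)
    hd0 hdn hcase hal0 hal1 hbe0 hbe1
  have hsum : ∑ x : Fin n, ∑ q : Config n × Config n,
      localKernel (nInfGraph G) a lam kap σ x q.1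
        * localKernel (nInfGraph G) a lam kap η x q.2 * (hamming q.1 q.2 : ℝ)^2
      ≤ (n:ℝ) * (hamming σ η : ℝ)^2 + ((n:ℝ) - 2 * gammaSIS n a kap * (hamming σ η : ℝ)^2) := by
    calc ∑ x : Fin n, ∑ q : Config n × Config n,
        localKernel (nInfGraph G) a lam kap σ x q.1
          * localKernel (nInfGraph G) a lam kap η x q.2 * (hamming q.1 q.2 : ℝ)^2
        ≤ ∑ x : Fin n, ((hamming σ η : ℝ)^2
            + (if σ x = η x then be * (2*(hamming σ η : ℝ)+1)
                else al * (1-2*(hamming σ η : ℝ)))) :=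
          Finset.sum_le_sum fun x _ => key x
      _ = (n:ℝ) * (hamming σ η : ℝ)^2
            + (((n:ℝ) - (hamming σ η : ℝ)) * (be * (2*(hamming σ η : ℝ)+1))
              + (hamming σ η : ℝ) * (al * (1-2*(hamming σ η : ℝ)))) := by
          rw [Finset.sum_add_distrib, Finset.sum_const, Finset.card_univ, Fintype.card_fin,
            hcount, nsmul_eq_mul]
      _ ≤ (n:ℝ) * (hamming σ η : ℝ)^2
            + ((n:ℝ) - 2 * gammaSIS n a kap * (hamming σ η : ℝ)^2) := by
          rw [hγeq]
          nlinarith [hfa]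
  calc (1/(n:ℝ)) * ∑ x : Fin n, ∑ q : Config n × Config n,
      localKernel (nInfGraph G) a lam kap σ x q.1
        * localKernel (nInfGraph G) a lam kap η x q.2 * (hamming q.1 q.2 : ℝ)^2
      ≤ (1/(n:ℝ)) * ((n:ℝ) * (hamming σ η : ℝ)^2
          + ((n:ℝ) - 2 * gammaSIS n a kap * (hamming σ η : ℝ)^2)) :=
        mul_le_mul_of_nonneg_left hsum (by positivity)
    _ = (1 - 2 * gammaSIS n a kap / (n:ℝ)) * (hamming σ η : ℝ)^2 + 1 := by
        field_simp
        ring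

end Row

lemma expect_delta {S : Type*} [Fintype S] [DecidableEq S] (s0 : S) (f : S → ℝ) :
    _root_.expect (deltaDist s0) f = f s0 := by
  unfold _root_.expect deltaDist
  simp [ite_mul]


/-- Claim `second moment` of the paper: second moment bound for the
Hamming distance of the coupled chains. -/
theorem noisySIS_hamming_second_moment_bound
    (n : ℕ) (hn : 2 ≤ n) (G : SimpleGraph (Fin n)) [DecidableRel G.Adj]
    (a lam kap : ℝ) (ha : 0 < a) (hlam : 0 < lam) (hkap : 0 < kap)
    (hpstar : a + lam * (G.maxDegree : ℝ) < 1)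
    (hkap' : kap < 1 / (4 * ((n : ℝ) - 1)))
    (hreg1 : 1 - kap < a) (hreg2 : 1 / 2 < 1 - kap)
    (σ0 η0 : Config n) (t : ℕ) :
    expect (iterDist (sisCoupling (nInfGraph G) a lam kap) (deltaDist (σ0, η0)) t)
        (fun q => (hamming q.1 q.2 : ℝ) ^ 2) ≤
      (hamming σ0 η0 : ℝ) ^ 2 * (1 - 2 * gammaSIS n a kap / n) ^ t
        + n / (2 * gammaSIS n a kap) := by
  have hn1 : (1:ℝ) ≤ (n:ℝ) - 1 := by
    have : (2:ℝ) ≤ n := by exact_mod_cast hn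
    linarith
  have hn0 : (0:ℝ) < n := by linarith
  have hk2 : kap ≤ 1/2 := by linarith
  have ha1 : a < 1 := by nlinarith [mul_nonneg hlam.le (Nat.cast_nonneg G.maxDegree)]
  have hγ : 0 < gammaSIS n a kap := gamma_pos hn hkap hkap' hreg1 hreg2 ha1.le
  have hγ1 : gammaSIS n a kap ≤ 1 := gamma_le_one hn hkap.le hk2 ha.le ha1.le
  have hr0 : 0 ≤ 1 - 2 * gammaSIS n a kap / n := by
    rw [sub_nonneg, div_le_one hn0]
    linarith
  -- flip probability bounds
  have hflip : ∀ (τ : Config n) (x : Fin n), 0 ≤ flipProb (nInfGraph G) a lam kap τ x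
      ∧ flipProb (nInfGraph G) a lam kap τ x ≤ 1 := by
    intro τ x
    have hd : (nInfGraph G τ x : ℝ) ≤ (G.maxDegree : ℝ) := by
      have h1 : nInfGraph G τ x ≤ G.degree x := Finset.card_filter_le _ _
      exact_mod_cast h1.trans (G.degree_le_maxDegree x)
    have h0 : (0:ℝ) ≤ (nInfGraph G τ x : ℝ) := Nat.cast_nonneg _
    unfold flipProb
    split_ifs
    · constructor <;> linarith
    · constructor
      · nlinarith
      · nlinarith
  -- kernel nonnegativity and row sums
  have hKnn : ∀ p q, 0 ≤ sisCoupling (nInfGraph G) a lam kap p q := by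
    intro p q
    unfold sisCoupling
    refine mul_nonneg (by positivity) (Finset.sum_nonneg fun x _ => mul_nonneg ?_ ?_)
    · exact localKernel_nonneg _ _ _ _ _ _ _ (hflip p.1 x).1 (hflip p.1 x).2
    · exact localKernel_nonneg _ _ _ _ _ _ _ (hflip p.2 x).1 (hflip p.2 x).2
  have hKsum : ∀ p : Config n × Config n,
      ∑ q, sisCoupling (nInfGraph G) a lam kap p q = 1 := by
    intro p
    simp only [sisCoupling]
    have hx : ∀ x : Fin n, ∑ q : Config n × Config n,
        localKernel (nInfGraph G) a lam kap p.1 x q.1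
          * localKernel (nInfGraph G) a lam kap p.2 x q.2 = 1 := by
      intro x
      have h := sum_pair_mul (nInfGraph G) a lam kap p.1 p.2 x (fun _ _ => (1:ℝ))
      simp only [mul_one] at h
      rw [h]; ring
    rw [← Finset.mul_sum, Finset.sum_comm, Finset.sum_congr rfl fun x _ => hx x,
      Finset.sum_const, Finset.card_univ, Fintype.card_fin, nsmul_eq_mul, mul_one]
    field_simp
  -- evolved distribution facts
  have hδnn : ∀ q, 0 ≤ deltaDist (σ0, η0) q := by
    intro q; unfold deltaDist; split_ifs <;> norm_num
  have hδ1 : ∑ q, deltaDist (σ0, η0) q = 1 := by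
    simp [deltaDist]
  have hμnn := iterDist_nonneg _ hKnn _ hδnn
  have hμ1 := iterDist_sum_one _ hKsum _ hδ1
  -- row bound
  have hrow : ∀ p : Config n × Config n,
      ∑ q, sisCoupling (nInfGraph G) a lam kap p q * (hamming q.1 q.2 : ℝ)^2
        ≤ (1 - 2 * gammaSIS n a kap / n) * (hamming p.1 p.2 : ℝ)^2 + 1 := by
    intro p
    obtain ⟨s, e⟩ := p
    exact row_bound n hn G a lam kap ha hlam hkap hpstar hkap' hreg1 hreg2 s e
  have hC : (1 - 2 * gammaSIS n a kap / n) * ((n:ℝ) / (2 * gammaSIS n a kap)) + 1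
      = (n:ℝ) / (2 * gammaSIS n a kap) := by
    field_simp
    ring
  have hCnn : 0 ≤ (n:ℝ) / (2 * gammaSIS n a kap) := by positivity
  induction t with
  | zero =>
    rw [show iterDist (sisCoupling (nInfGraph G) a lam kap) (deltaDist (σ0, η0)) 0
        = deltaDist (σ0, η0) from rfl, expect_delta]
    simp only [pow_zero, mul_one]
    linarith
  | succ t ih =>
    have hstep := expect_step_le (sisCoupling (nInfGraph G) a lam kap)
      (iterDist (sisCoupling (nInfGraph G) a lam kap) (deltaDist (σ0, η0)) t)
      (fun q => (hamming q.1 q.2 : ℝ)^2) (1 - 2 * gammaSIS n a kap / n)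
      (hμnn t) (hμ1 t) hrow
    calc expect (iterDist (sisCoupling (nInfGraph G) a lam kap) (deltaDist (σ0, η0)) (t+1))
          (fun q => (hamming q.1 q.2 : ℝ)^2)
        = expect (stepDist (sisCoupling (nInfGraph G) a lam kap)
            (iterDist (sisCoupling (nInfGraph G) a lam kap) (deltaDist (σ0, η0)) t))
            (fun q => (hamming q.1 q.2 : ℝ)^2) := rfl
      _ ≤ (1 - 2 * gammaSIS n a kap / n)
            * expect (iterDist (sisCoupling (nInfGraph G) a lam kap) (deltaDist (σ0, η0)) t)
              (fun q => (hamming q.1 q.2 : ℝ)^2) + 1 := hstep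
      _ ≤ (1 - 2 * gammaSIS n a kap / n)
            * ((hamming σ0 η0 : ℝ)^2 * (1 - 2 * gammaSIS n a kap / n)^t
              + (n:ℝ) / (2 * gammaSIS n a kap)) + 1 := by
          have := mul_le_mul_of_nonneg_left ih hr0
          linarith
      _ = (hamming σ0 η0 : ℝ)^2 * (1 - 2 * gammaSIS n a kap / n)^(t+1)
            + ((1 - 2 * gammaSIS n a kap / n) * ((n:ℝ) / (2 * gammaSIS n a kap)) + 1) := by
          rw [pow_succ]; ring
      _ = (hamming σ0 η0 : ℝ)^2 * (1 - 2 * gammaSIS n a kap / n)^(t+1)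
            + (n:ℝ) / (2 * gammaSIS n a kap) := by rw [hC]
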